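/- arXiv:math-ph/0102009 — 4 statements merged into one kernel-verified Lean document; each statement's English description precedes it below -/
import Mathlib

section
/- Toom's rule R preserves connectedness: if S is a connected subset of Z^2 (connected in the graph G where each point is adjacent to its north, south, east, west, north-west and south-east neighbors), then R(S) is connected or empty. -/
/-
Proof idea: two tiles sharing a point have equal or `G`-adjacent centers, and the two ends of
every edge of `G` lie in a common tile (the one centered at their componentwise minimum). So a
path in `S` lifts to a path in `R(S)`: each edge of the path sits in a tile holding two points of
`S`, whose center is therefore in `R(S)`, and consecutive such centers share a point of `S`.
-/

open Set

abbrev Pt := ℤ × ℤ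

/-- Adjacency in the graph `G`: neighbor increments
`(0,1), (0,-1), (1,0), (-1,0), (-1,1), (1,-1)`. -/
def adjG (p q : Pt) : Prop :=
  q - p ∈ ({(0,1), (0,-1), (1,0), (-1,0), (-1,1), (1,-1)} : Set Pt)

/-- Reachability within a set `S` along edges of `G`. -/
def ReachIn (S : Set Pt) (p q : Pt) : Prop :=
  Relation.ReflTransGen (fun a b => a ∈ S ∧ b ∈ S ∧ adjG a b) p q

/-- `S` is connected in the graph `G`. -/
def ConnectedIn (S : Set Pt) : Prop :=
  ∀ p ∈ S, ∀ q ∈ S, ReachIn S p q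

/-- The tile with center `p`. -/
def tile (p : Pt) : Set Pt := {p, p + (1, 0), p + (0, 1)}

/-- Inflation operation `Q`. -/
def QOp (S : Set Pt) : Set Pt := ⋃ a ∈ S, tile a

/-- Toom's rule `R`: majority of self, north, east. -/
def ROp (S : Set Pt) : Set Pt := {p | 2 ≤ (S ∩ tile p).ncard}

/-- The biased Toom rule `R⁺ = Q ∘ R ∘ R`. -/
def RPlus (S : Set Pt) : Set Pt := QOp (ROp (ROp S))

lemma finite_tile (p : Pt) : (tile p).Finite :=
  toFinite ({p, p + (1, 0), p + (0, 1)} : Set Pt)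

lemma adjG.ne {a b : Pt} (h : adjG a b) : a ≠ b := by
  rintro rfl
  simp [adjG, Prod.ext_iff] at h

lemma eq_or_adjG_of_mem_tile {c c' x : Pt} (h : x ∈ tile c) (h' : x ∈ tile c') :
    c = c' ∨ adjG c c' := by
  simp only [tile, adjG, mem_insert_iff, mem_singleton_iff, Prod.ext_iff,
    Prod.fst_add, Prod.snd_add, Prod.fst_sub, Prod.snd_sub] at h h' ⊢
  omega

lemma adjG.mem_tile_inf {a b : Pt} (h : adjG a b) : a ∈ tile (a ⊓ b) ∧ b ∈ tile (a ⊓ b) := by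
  simp only [tile, adjG, mem_insert_iff, mem_singleton_iff, Prod.ext_iff,
    Prod.fst_add, Prod.snd_add, Prod.fst_sub, Prod.snd_sub, Prod.fst_inf, Prod.snd_inf] at h ⊢
  omega

lemma mem_ROp_of_mem_tile {S : Set Pt} {a b c : Pt} (ha : a ∈ S) (hb : b ∈ S) (hab : a ≠ b)
    (ha' : a ∈ tile c) (hb' : b ∈ tile c) : c ∈ ROp S :=
  ((one_lt_ncard_iff ((finite_tile c).inter_of_right S)).mpr
    ⟨a, b, ⟨ha, ha'⟩, ⟨hb, hb'⟩, hab⟩ : 1 < (S ∩ tile c).ncard)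

lemma inter_tile_nonempty_of_mem_ROp {S : Set Pt} {p : Pt} (hp : p ∈ ROp S) :
    (S ∩ tile p).Nonempty :=
  nonempty_of_ncard_ne_zero (by have : 2 ≤ (S ∩ tile p).ncard := hp; omega)

lemma reachIn_ROp_of_mem_tile {S : Set Pt} {p q x : Pt} (hp : p ∈ ROp S) (hq : q ∈ ROp S)
    (hxp : x ∈ tile p) (hxq : x ∈ tile q) : ReachIn (ROp S) p q := by
  rcases eq_or_adjG_of_mem_tile hxp hxq with rfl | hadj
  · exact .refl
  · exact .single ⟨hp, hq, hadj⟩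

lemma ReachIn.lift_ROp {S : Set Pt} {a b p q : Pt} (h : ReachIn S a b) (hp : p ∈ ROp S)
    (hap : a ∈ tile p) (hq : q ∈ ROp S) (hbq : b ∈ tile q) : ReachIn (ROp S) p q := by
  induction h generalizing q with
  | refl => exact reachIn_ROp_of_mem_tile hp hq hap hbq
  | tail _ hstep ih =>
    obtain ⟨hbS, hcS, hadj⟩ := hstep
    obtain ⟨hb, hc⟩ := hadj.mem_tile_inf
    have hm : _ ∈ ROp S := mem_ROp_of_mem_tile hbS hcS hadj.ne hb hc
    exact (ih hm hb).trans (reachIn_ROp_of_mem_tile hm hq hc hbq)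

/-- Toom's rule preserves connectedness: if `S` is connected then `R(S)` is
connected or empty. -/
theorem toom_connected (S : Set Pt) (hS : ConnectedIn S) :
    ConnectedIn (ROp S) ∨ ROp S = ∅ := by
  refine Or.inl fun p hp q hq => ?_
  obtain ⟨a, haS, hap⟩ := inter_tile_nonempty_of_mem_ROp hp
  obtain ⟨b, hbS, hbq⟩ := inter_tile_nonempty_of_mem_ROp hq
  exact (hS a haS b hbS).lift_ROp hp hap hq hbq
end

section
/- If sets A1, A2 ⊆ Z^2 contain points that are neighbors in the graph G, and A_j ⊆ D(I_j, 1/3) for triangles I_1, I_2, then there is a triangle I with span(I) ≤ span(I_1) + span(I_2) such that A_1 ∪ A_2 ⊆ D(I, 1/3). -/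
open Set

/-- A triangle is given by parameters `(a,b,c)`; it is
`L(a,b,c) = {(α,β) : -α ≤ a, -β ≤ b, α+β ≤ c}` with span `a+b+c`. -/
abbrev Tri := ℝ × ℝ × ℝ

def triSpan (t : Tri) : ℝ := t.1 + t.2.1 + t.2.2

/-- The lattice point `p` lies in the deflation by `d` of the triangle `t`. -/
def inDefl (t : Tri) (d : ℝ) (p : Pt) : Prop :=
  -(p.1 : ℝ) ≤ t.1 - d ∧ -(p.2 : ℝ) ≤ t.2.1 - d ∧ (p.1 : ℝ) + (p.2 : ℝ) ≤ t.2.2 - d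

/-- `span(E, d)`: the minimum total span of a finite family of (nonempty)
triangles whose `d`-deflations cover `E`. -/
noncomputable def spanD (E : Set Pt) (d : ℝ) : ℝ :=
  sInf { s : ℝ | ∃ T : Finset Tri, (∀ t ∈ T, 0 ≤ triSpan t) ∧
    (∀ p ∈ E, ∃ t ∈ T, inDefl t d p) ∧ s = ∑ t ∈ T, triSpan t }

/-- `Span(E) = span(E, 2)`. -/
noncomputable def SpanE (E : Set Pt) : ℝ := spanD E 2

/- The componentwise maximum `I₁ ⊔ I₂` covers both sets, and
`span (I₁ ⊔ I₂) = span I₁ + span I₂ - span (I₁ ⊓ I₂)`. The neighbours `a ∈ D(I₁, 1/3)` and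
`b ∈ D(I₂, 1/3)` give `span (I₁ ⊓ I₂) ≥ 3 · 1/3 - 1 = 0`, because along an edge of `G` the
coordinatewise maxima of the endpoints exceed the smaller coordinate sum by at most one. -/

theorem max_add_max_le_min_add_one_of_adjG {p q : Pt} (h : adjG p q) :
    max p.1 q.1 + max p.2 q.2 ≤ min (p.1 + p.2) (q.1 + q.2) + 1 := by
  simp only [adjG, Set.mem_insert_iff, Set.mem_singleton_iff, Prod.ext_iff, Prod.fst_sub,
    Prod.snd_sub] at h
  omega

theorem triSpan_sup_add_triSpan_inf (s t : Tri) :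
    triSpan (s ⊔ t) + triSpan (s ⊓ t) = triSpan s + triSpan t := by
  simp only [triSpan, Prod.fst_sup, Prod.snd_sup, Prod.fst_inf, Prod.snd_inf]
  linarith [max_add_min s.1 t.1, max_add_min s.2.1 t.2.1, max_add_min s.2.2 t.2.2]

theorem inDefl_mono {s t : Tri} (hst : s ≤ t) {d : ℝ} {p : Pt} (h : inDefl s d p) :
    inDefl t d p :=
  ⟨h.1.trans (by linarith [hst.1]), h.2.1.trans (by linarith [hst.2.1]),
    h.2.2.trans (by linarith [hst.2.2])⟩

theorem sub_one_le_triSpan_inf_of_adjG {s t : Tri} {d : ℝ} {p q : Pt} (hpq : adjG p q)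
    (hp : inDefl s d p) (hq : inDefl t d q) : 3 * d - 1 ≤ triSpan (s ⊓ t) := by
  have key : max (p.1 : ℝ) q.1 + max (p.2 : ℝ) q.2 ≤ min (p.1 + p.2 : ℝ) (q.1 + q.2) + 1 := by
    exact_mod_cast max_add_max_le_min_add_one_of_adjG hpq
  obtain ⟨hp1, hp2, hp3⟩ := hp
  obtain ⟨hq1, hq2, hq3⟩ := hq
  have hfst : d - max (p.1 : ℝ) q.1 ≤ (s ⊓ t).1 :=
    le_min (by linarith [le_max_left (p.1 : ℝ) q.1]) (by linarith [le_max_right (p.1 : ℝ) q.1])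
  have hsnd : d - max (p.2 : ℝ) q.2 ≤ (s ⊓ t).2.1 :=
    le_min (by linarith [le_max_left (p.2 : ℝ) q.2]) (by linarith [le_max_right (p.2 : ℝ) q.2])
  have hsum : d + min (p.1 + p.2 : ℝ) (q.1 + q.2) ≤ (s ⊓ t).2.2 :=
    le_min (by linarith [min_le_left (p.1 + p.2 : ℝ) (q.1 + q.2)])
      (by linarith [min_le_right (p.1 + p.2 : ℝ) (q.1 + q.2)])
  simp only [triSpan]
  linarith

/-- If `A1, A2` contain neighboring points and `A_j ⊆ D(I_j, 1/3)` then some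
triangle `I` with `span(I) ≤ span(I1) + span(I2)` satisfies `A1 ∪ A2 ⊆ D(I, 1/3)`. -/
theorem triangles_union_neighbors (A1 A2 : Set Pt) (I1 I2 : Tri)
    (hadj : ∃ a ∈ A1, ∃ b ∈ A2, adjG a b)
    (h1 : ∀ p ∈ A1, inDefl I1 (1/3) p) (h2 : ∀ p ∈ A2, inDefl I2 (1/3) p) :
    ∃ I : Tri, triSpan I ≤ triSpan I1 + triSpan I2 ∧
      ∀ p ∈ A1 ∪ A2, inDefl I (1/3) p := by
  obtain ⟨a, ha, b, hb, hab⟩ := hadj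
  refine ⟨I1 ⊔ I2, ?_, ?_⟩
  · have hinf := sub_one_le_triSpan_inf_of_adjG hab (h1 a ha) (h2 b hb)
    linarith [triSpan_sup_add_triSpan_inf I1 I2]
  · rintro p (hp | hp)
    · exact inDefl_mono le_sup_left (h1 p hp)
    · exact inDefl_mono le_sup_right (h2 p hp)
end

section
/- (Cut decomposition lemma) Let (C,A,B) be a closed cut of a connected set S ⊆ Z^2 with |C| < θ(S,α,β). Decompose A ∪ C into connected components U_1, U_2, … and B ∪ C into connected components V_1, V_2, …. Then either Span(U_i) ≤ α·|U_i ∩ C| + β for all i, or Span(V_j) ≤ α·|V_j ∩ C| + β for all j. -/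
open Set

/-- `(C, A1, A2)` is a cut of `S`: disjoint subsets of `S` such that every
path in `S` from `A1` to `A2` passes through `C`. -/
def IsCut (S C A1 A2 : Set Pt) : Prop :=
  C ⊆ S ∧ A1 ⊆ S ∧ A2 ⊆ S ∧
  Disjoint C A1 ∧ Disjoint C A2 ∧ Disjoint A1 A2 ∧
  ∀ p ∈ A1, ∀ q ∈ A2, ¬ ReachIn (S \ C) p q

/-- `bdry S A`: elements of `S \ A` adjacent to an element of `A`. -/
def bdry (S A : Set Pt) : Set Pt := {b | b ∈ S ∧ b ∉ A ∧ ∃ a ∈ A, adjG a b}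

def IsClosedCut (S C A1 A2 : Set Pt) : Prop :=
  IsCut S C A1 A2 ∧ bdry S A1 ∪ bdry S A2 ⊆ C

def IsConnCut (S C A1 A2 : Set Pt) : Prop :=
  IsCut S C A1 A2 ∧ ConnectedIn (A1 ∪ C) ∧ ConnectedIn (A2 ∪ C)

/-- `θ(S, α, β)`: the smallest `k` such that `S` has a connected cut with
cutting set of size `k` and `min_j Span(A_j ∪ C) > α k + β`; `∞` if none. -/
noncomputable def theta (S : Set Pt) (α β : ℝ) : ℕ∞ :=
  sInf { k : ℕ∞ | ∃ C A1 A2 : Set Pt, IsConnCut S C A1 A2 ∧ C.Finite ∧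
    k = (C.ncard : ℕ∞) ∧
    α * (C.ncard : ℝ) + β < min (SpanE (A1 ∪ C)) (SpanE (A2 ∪ C)) }

/-- `Θ(S, α)`: as `θ` but over arbitrary (not necessarily connected) cuts. -/
noncomputable def bigTheta (S : Set Pt) (α : ℝ) : ℕ∞ :=
  sInf { k : ℕ∞ | ∃ C A1 A2 : Set Pt, IsCut S C A1 A2 ∧ C.Finite ∧
    k = (C.ncard : ℕ∞) ∧
    α * (C.ncard : ℝ) < min (SpanE (A1 ∪ C)) (SpanE (A2 ∪ C)) }

/-- `U` is a connected component of `W`. -/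
def IsCompOf (U W : Set Pt) : Prop := ∃ x ∈ W, U = {y ∈ W | ReachIn W x y}

/-!
Suppose a component `U` of `A ∪ C` and a component `V` of `B ∪ C` both violate the bound. Let `W`
be the component of `S \ (U \ C)` containing `V`. Every path of `S` leaving `U \ C` enters `W`
through `U ∩ W ⊆ C`, so any `K` with `U ∩ W ⊆ K ⊆ W` cuts `U \ K` off from `W \ K`; joining
`V` to `U ∩ W` by finitely many paths inside `W` makes this a connected cut. Since
`|K| ≤ |C| < θ`, one side has small span. For `α ≥ 0` take `K = U ∩ W`: then `U` cannot be the
small side, so `V` is, which forces `|V ∩ C| < |U ∩ C|`; by symmetry also `|U ∩ C| < |V ∩ C|`.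
For `α < 0` enlarge `K` inside `W` to exactly `|C|` points, and both sides are large; if `W` is
too small for that, `V` itself is a small connected set of large span.
-/

open Relation

theorem adjG_symm {p q : Pt} (h : adjG p q) : adjG q p := by
  simp only [adjG, Set.mem_insert_iff, Set.mem_singleton_iff] at h ⊢
  have e : p - q = -(q - p) := by ring
  rcases h with h | h | h | h | h | h <;> rw [e, h] <;> simp [Prod.ext_iff]

namespace ReachIn

variable {T T' D : Set Pt} {p q : Pt}

theorem mono (h : T ⊆ T') (hr : ReachIn T p q) : ReachIn T' p q :=
  ReflTransGen.mono (fun _ _ hab => ⟨h hab.1, h hab.2.1, hab.2.2⟩) _ _ hr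

theorem symm (hr : ReachIn T p q) : ReachIn T q p := by
  induction hr with
  | refl => exact ReflTransGen.refl
  | tail _ hbc ih => exact ReflTransGen.head ⟨hbc.2.1, hbc.1, adjG_symm hbc.2.2⟩ ih

theorem exists_adj_exit (hr : ReachIn T p q) (hp : p ∈ D) (hq : q ∉ D) :
    ∃ z ∈ T ∩ D, ∃ x ∈ T \ D, adjG z x := by
  induction hr with
  | refl => exact absurd hp hq
  | @tail b c _ hbc ih =>
    by_cases hb : b ∈ D
    · exact ⟨b, ⟨hbc.1, hb⟩, c, ⟨hbc.2.1, hq⟩, hbc.2.2⟩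
    · exact ih hb

end ReachIn

theorem connectedIn_of_forall_reachIn {T : Set Pt} {x : Pt} (h : ∀ y ∈ T, ReachIn T x y) :
    ConnectedIn T :=
  fun p hp q hq => (h p hp).symm.trans (h q hq)

theorem connectedIn_singleton (p : Pt) : ConnectedIn {p} := by
  rintro x rfl y rfl
  exact ReflTransGen.refl

theorem ConnectedIn.insert_of_adj {T : Set Pt} {b c : Pt} (hT : ConnectedIn T) (hb : b ∈ T)
    (hbc : adjG b c) : ConnectedIn (insert c T) := by
  refine connectedIn_of_forall_reachIn (x := b) ?_
  rintro y (rfl | hy)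
  · exact ReflTransGen.single ⟨mem_insert_of_mem _ hb, mem_insert _ _, hbc⟩
  · exact (hT b hb y hy).mono (subset_insert _ _)

theorem ConnectedIn.union {X Y : Set Pt} {x : Pt} (hX : ConnectedIn X) (hY : ConnectedIn Y)
    (hxX : x ∈ X) (hxY : x ∈ Y) : ConnectedIn (X ∪ Y) := by
  refine connectedIn_of_forall_reachIn (x := x) ?_
  rintro y (hy | hy)
  · exact (hX x hxX y hy).mono subset_union_left
  · exact (hY x hxY y hy).mono subset_union_right

theorem ReachIn.exists_finite_connectedIn {T : Set Pt} {p q : Pt} (hp : p ∈ T)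
    (hr : ReachIn T p q) : ∃ Q ⊆ T, Q.Finite ∧ ConnectedIn Q ∧ p ∈ Q ∧ q ∈ Q := by
  induction hr with
  | refl =>
    exact ⟨{p}, singleton_subset_iff.2 hp, finite_singleton p, connectedIn_singleton p, rfl, rfl⟩
  | @tail b c _ hbc ih =>
    obtain ⟨Q, hQT, hQfin, hQ, hpQ, hbQ⟩ := ih
    exact ⟨insert c Q, insert_subset hbc.2.1 hQT, hQfin.insert c, hQ.insert_of_adj hbQ hbc.2.2,
      mem_insert_of_mem c hpQ, mem_insert c Q⟩

theorem ConnectedIn.exists_finite_connectedIn_superset {W F : Set Pt} {x : Pt}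
    (hW : ConnectedIn W) (hx : x ∈ W) (hF : F.Finite) (hFW : F ⊆ W) :
    ∃ P ⊆ W, P.Finite ∧ ConnectedIn P ∧ x ∈ P ∧ F ⊆ P := by
  induction F, hF using Set.Finite.induction_on with
  | empty =>
    exact ⟨{x}, singleton_subset_iff.2 hx, finite_singleton x, connectedIn_singleton x, rfl,
      empty_subset _⟩
  | @insert a F _ _ ih =>
    obtain ⟨P, hPW, hPfin, hP, hxP, hFP⟩ := ih ((subset_insert a F).trans hFW)
    obtain ⟨Q, hQW, hQfin, hQ, hxQ, haQ⟩ :=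
      (hW x hx a (hFW (mem_insert a F))).exists_finite_connectedIn hx
    exact ⟨P ∪ Q, union_subset hPW hQW, hPfin.union hQfin, hP.union hQ hxP hxQ, Or.inl hxP,
      insert_subset (Or.inr haQ) (hFP.trans subset_union_left)⟩

/-- The last conjunct records that `K'` is grown from `K` one adjacent point at a time. -/
theorem ConnectedIn.exists_extension {W K : Set Pt} (hW : ConnectedIn W) (hKW : K ⊆ W)
    (hK : K.Nonempty) (hKfin : K.Finite) {n : ℕ} (hn : K.ncard ≤ n) :
    ∃ K', K ⊆ K' ∧ K' ⊆ W ∧ K'.Finite ∧ K'.ncard ≤ n ∧ (K'.ncard = n ∨ K' = W) ∧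
      ∀ X, K ⊆ X → ConnectedIn X → ConnectedIn (X ∪ K') := by
  induction n, hn using Nat.le_induction with
  | base => exact ⟨K, subset_rfl, hKW, hKfin, le_rfl, Or.inl rfl,
      fun X hKX hX => by rwa [union_eq_self_of_subset_right hKX]⟩
  | succ n _ ih =>
    obtain ⟨K', hKK', hK'W, hK'fin, hK'n, hK'n' | hK'W', hK'⟩ := ih
    · by_cases hWK' : W ⊆ K'
      · exact ⟨K', hKK', hK'W, hK'fin, by omega, Or.inr (hK'W.antisymm hWK'), hK'⟩
      obtain ⟨w, hwW, hwK'⟩ := not_subset.1 hWK'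
      obtain ⟨k, hk⟩ := hK
      obtain ⟨z, ⟨-, hzK'⟩, x, ⟨hxW, hxK'⟩, hzx⟩ :=
        (hW k (hKW hk) w hwW).exists_adj_exit (hKK' hk) hwK'
      refine ⟨insert x K', hKK'.trans (subset_insert x K'), insert_subset hxW hK'W,
        hK'fin.insert x, ?_, Or.inl ?_, fun X hKX hX => ?_⟩
      · rw [ncard_insert_of_notMem hxK' hK'fin]; omega
      · rw [ncard_insert_of_notMem hxK' hK'fin]; omega
      · rw [union_insert]
        exact (hK' X hKX hX).insert_of_adj (Or.inr hzK') hzx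
    · exact ⟨K', hKK', hK'W, hK'fin, by omega, Or.inr hK'W', hK'⟩

namespace IsCompOf

variable {U T : Set Pt}

theorem subset (h : IsCompOf U T) : U ⊆ T := by
  obtain ⟨x, -, rfl⟩ := h
  exact fun y hy => hy.1

theorem nonempty (h : IsCompOf U T) : U.Nonempty := by
  obtain ⟨x, hx, rfl⟩ := h
  exact ⟨x, hx, ReflTransGen.refl⟩

theorem mem_of_adj (h : IsCompOf U T) {y z : Pt} (hy : y ∈ U) (hz : z ∈ T) (hyz : adjG y z) :
    z ∈ U := by
  obtain ⟨x, -, rfl⟩ := h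
  exact ⟨hz, hy.2.tail ⟨hy.1, hz, hyz⟩⟩

theorem connectedIn (h : IsCompOf U T) : ConnectedIn U := by
  obtain ⟨x, -, rfl⟩ := h
  refine connectedIn_of_forall_reachIn (x := x) fun y hy => ?_
  obtain ⟨-, hxy⟩ := hy
  induction hxy with
  | refl => exact ReflTransGen.refl
  | @tail b c hxb hbc ih => exact ih.tail ⟨⟨hbc.1, hxb⟩, ⟨hbc.2.1, hxb.tail hbc⟩, hbc.2.2⟩

end IsCompOf

def Coverable (E : Set Pt) : Prop :=
  ∃ T : Finset Tri, (∀ t ∈ T, 0 ≤ triSpan t) ∧ ∀ p ∈ E, ∃ t ∈ T, inDefl t 2 p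

theorem Coverable.mono {E F : Set Pt} (h : E ⊆ F) (hF : Coverable F) : Coverable E :=
  let ⟨T, hT, hFT⟩ := hF
  ⟨T, hT, fun p hp => hFT p (h hp)⟩

theorem Coverable.union {E F : Set Pt} (hE : Coverable E) (hF : Coverable F) :
    Coverable (E ∪ F) := by
  classical
  obtain ⟨T₁, hT₁, hET₁⟩ := hE
  obtain ⟨T₂, hT₂, hFT₂⟩ := hF
  refine ⟨T₁ ∪ T₂, fun t ht => (Finset.mem_union.1 ht).elim (hT₁ t) (hT₂ t), ?_⟩
  rintro p (hp | hp)
  · obtain ⟨t, ht, hpt⟩ := hET₁ p hp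
    exact ⟨t, Finset.mem_union_left _ ht, hpt⟩
  · obtain ⟨t, ht, hpt⟩ := hFT₂ p hp
    exact ⟨t, Finset.mem_union_right _ ht, hpt⟩

/-- One triangle of span `6` per point. -/
theorem Set.Finite.coverable {F : Set Pt} (hF : F.Finite) : Coverable F := by
  classical
  refine ⟨hF.toFinset.image fun p => ((2 : ℝ) - p.1, (2 : ℝ) - p.2, (2 : ℝ) + p.1 + p.2), ?_, ?_⟩
  · simp only [Finset.mem_image]
    rintro t ⟨p, -, rfl⟩
    simp only [triSpan]
    linarith
  · intro p hp
    exact ⟨_, Finset.mem_image_of_mem _ (hF.mem_toFinset.2 hp), by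
      simp only [inDefl]; refine ⟨?_, ?_, ?_⟩ <;> linarith⟩

theorem spanE_mono {E F : Set Pt} (h : E ⊆ F) (hF : Coverable F) : SpanE E ≤ SpanE F := by
  obtain ⟨T, hT, hFT⟩ := hF
  refine csInf_le_csInf ⟨0, ?_⟩ ⟨_, T, hT, hFT, rfl⟩ ?_
  · rintro s ⟨T, hT, -, rfl⟩
    exact Finset.sum_nonneg hT
  · rintro s ⟨T, hT, hFT, rfl⟩
    exact ⟨T, hT, fun p hp => hFT p (h hp), rfl⟩

/-- The junk value `sInf ∅ = 0`: this applies to every infinite set. -/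
theorem spanE_eq_zero {E : Set Pt} (h : ¬ Coverable E) : SpanE E = 0 := by
  unfold SpanE spanD
  convert Real.sInf_empty
  refine eq_empty_iff_forall_notMem.2 ?_
  rintro s ⟨T, hT, hET, rfl⟩
  exact h ⟨T, hT, hET⟩

theorem spanE_le_spanE_union_of_finite {E F : Set Pt} (hF : F.Finite) :
    SpanE E ≤ SpanE (E ∪ F) := by
  by_cases hE : Coverable E
  · exact spanE_mono subset_union_left (hE.union hF.coverable)
  · rw [spanE_eq_zero hE, spanE_eq_zero fun h => hE (h.mono subset_union_left)]

section Theta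

variable {S K A₁ A₂ : Set Pt} {α β : ℝ}

theorem min_spanE_le_of_lt_theta (hc : IsConnCut S K A₁ A₂) (hK : K.Finite)
    (hlt : (K.ncard : ℕ∞) < theta S α β) :
    min (SpanE (A₁ ∪ K)) (SpanE (A₂ ∪ K)) ≤ α * K.ncard + β := by
  by_contra! h
  exact (sInf_le ⟨K, A₁, A₂, hc, hK, rfl, h⟩ : theta S α β ≤ _).not_gt hlt

theorem spanE_le_of_lt_theta (hKS : K ⊆ S) (hK : K.Finite) (hconn : ConnectedIn K)
    (hlt : (K.ncard : ℕ∞) < theta S α β) : SpanE K ≤ α * K.ncard + β := by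
  have hc : IsConnCut S K ∅ ∅ :=
    ⟨⟨hKS, empty_subset S, empty_subset S, disjoint_empty K, disjoint_empty K,
      disjoint_empty ∅, fun _ hp => hp.elim⟩, by rwa [empty_union], by rwa [empty_union]⟩
  simpa using min_spanE_le_of_lt_theta hc hK hlt

end Theta

theorem IsClosedCut.symm {S C A B : Set Pt} (h : IsClosedCut S C A B) : IsClosedCut S C B A := by
  obtain ⟨⟨hCS, hAS, hBS, hCA, hCB, hAB, hsep⟩, hcl⟩ := h
  exact ⟨⟨hCS, hBS, hAS, hCB, hCA, hAB.symm, fun p hp q hq hpq => hsep q hq p hp hpq.symm⟩,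
    by rwa [union_comm]⟩

/-- `bdry S (S \ W)` consists of the points of `W` with a neighbour in `S \ W`, so a path of
`S` starting in `U \ K` can enter `W` only through `U ∩ W ⊆ K`. -/
theorem isCut_of_bdry_subset {S U W K X : Set Pt} (hUS : U ⊆ S) (hWS : W ⊆ S) (hXW : X ⊆ W)
    (hbd : bdry S (S \ W) ⊆ U) (hUW : U ∩ W ⊆ K) (hKW : K ⊆ W) :
    IsCut S K (U \ K) (X \ K) := by
  have hblock : ∀ p ∈ U \ K, ∀ q, ReachIn (S \ K) p q → q ∉ W := by
    intro p hp q hpq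
    induction hpq with
    | refl => exact fun hpW => hp.2 (hUW ⟨hp.1, hpW⟩)
    | @tail b c _ hbc ih =>
      intro hcW
      have hcU : c ∈ U := hbd ⟨hbc.2.1.1, fun h => h.2 hcW, b, ⟨hbc.1.1, ih⟩, hbc.2.2⟩
      exact hbc.2.1.2 (hUW ⟨hcU, hcW⟩)
  refine ⟨hKW.trans hWS, sdiff_subset.trans hUS, sdiff_subset.trans (hXW.trans hWS),
    disjoint_sdiff_right, disjoint_sdiff_right, ?_,
    fun p hp q hq hpq => hblock p hp q hpq (hXW hq.1)⟩
  rw [disjoint_left]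
  rintro a ⟨haU, haK⟩ ⟨haX, -⟩
  exact haK (hUW ⟨haU, hXW haX⟩)

theorem bdry_sdiff_subset_of_isCompOf {S C A U W : Set Pt} (hcl : bdry S A ⊆ C)
    (hU : IsCompOf U (A ∪ C)) (hW : IsCompOf W (S \ (U \ C))) : bdry S (S \ W) ⊆ U := by
  rintro c ⟨hcS, hcW, b, ⟨hbS, hbW⟩, hbc⟩
  have hcW : c ∈ W := not_not.1 fun h => hcW ⟨hcS, h⟩
  have hbUC : b ∈ U \ C := not_not.1 fun h => hbW (hW.mem_of_adj hcW ⟨hbS, h⟩ (adjG_symm hbc))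
  have hbA : b ∈ A := (hU.subset hbUC.1).resolve_right hbUC.2
  have hcAC : c ∈ A ∪ C := by
    by_cases hcA : c ∈ A
    · exact Or.inl hcA
    · exact Or.inr (hcl ⟨hcS, hcA, b, hbA, hbc⟩)
  exact hU.mem_of_adj hbUC.1 hcAC hbc

theorem spanE_le_or_spanE_le_of_lt_theta {S U V W K : Set Pt} {α β : ℝ} (hUS : U ⊆ S)
    (hWS : W ⊆ S) (hbd : bdry S (S \ W) ⊆ U) (hU : ConnectedIn U) (hV : ConnectedIn V)
    (hW : ConnectedIn W) (hVne : V.Nonempty) (hVW : V ⊆ W) (hUWK : U ∩ W ⊆ K) (hKW : K ⊆ W)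
    (hKfin : K.Finite) (hK : ∀ X, U ∩ W ⊆ X → ConnectedIn X → ConnectedIn (X ∪ K))
    (hlt : (K.ncard : ℕ∞) < theta S α β) :
    SpanE U ≤ α * K.ncard + β ∨ SpanE V ≤ α * K.ncard + β := by
  obtain ⟨v, hvV⟩ := hVne
  obtain ⟨P, hPW, hPfin, hP, hvP, hUWP⟩ :=
    hW.exists_finite_connectedIn_superset (hVW hvV) (hKfin.subset hUWK) inter_subset_right
  have hc : IsConnCut S K (U \ K) ((V ∪ P) \ K) :=
    ⟨isCut_of_bdry_subset hUS hWS (union_subset hVW hPW) hbd hUWK hKW,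
      by rw [sdiff_union_self]; exact hK U inter_subset_left hU,
      by rw [sdiff_union_self]; exact hK _ (hUWP.trans subset_union_right) (hV.union hP hvV hvP)⟩
  have hmin := min_spanE_le_of_lt_theta hc hKfin hlt
  rw [sdiff_union_self, sdiff_union_self, min_le_iff] at hmin
  refine hmin.imp (fun h => (spanE_le_spanE_union_of_finite hKfin).trans h) fun h => ?_
  calc SpanE V ≤ SpanE (V ∪ (P ∪ K)) := spanE_le_spanE_union_of_finite (hPfin.union hKfin)
    _ = SpanE (V ∪ P ∪ K) := by rw [union_assoc]
    _ ≤ _ := h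

theorem not_subset_of_lt_spanE {S C U : Set Pt} {α β : ℝ} (hCfin : C.Finite)
    (hsmall : (C.ncard : ℕ∞) < theta S α β) (hUS : U ⊆ S) (hU : ConnectedIn U)
    (hbU : α * (U ∩ C).ncard + β < SpanE U) : ¬ U ⊆ C := by
  intro hUC
  have := spanE_le_of_lt_theta hUS (hCfin.subset hUC) hU
    ((Nat.cast_le.2 (ncard_le_ncard hUC hCfin)).trans_lt hsmall)
  rw [inter_eq_left.2 hUC] at hbU
  linarith

theorem exists_separating_set {S C A B U V : Set Pt} (hS : ConnectedIn S)
    (hcut : IsClosedCut S C A B) (hU : IsCompOf U (A ∪ C)) (hV : IsCompOf V (B ∪ C))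
    (hUC : ¬ U ⊆ C) :
    ∃ W ⊆ S, ConnectedIn W ∧ V ⊆ W ∧ bdry S (S \ W) ⊆ U ∧ U ∩ W ⊆ C ∧ (U ∩ W).Nonempty := by
  obtain ⟨⟨hCS, hAS, hBS, -, -, hAB, -⟩, hcl⟩ := hcut
  obtain ⟨u, huU, huC⟩ := not_subset.1 hUC
  obtain ⟨v, hvV⟩ := hV.nonempty
  have hBC : B ∪ C ⊆ S \ (U \ C) := fun y hy =>
    ⟨union_subset hBS hCS hy, fun ⟨hyU, hyC⟩ =>
      hy.elim (hAB.ne_of_mem ((hU.subset hyU).resolve_right hyC) · rfl) hyC⟩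
  obtain ⟨W, hWdef⟩ : ∃ W : Set Pt, W = {y ∈ S \ (U \ C) | ReachIn (S \ (U \ C)) v y} :=
    ⟨_, rfl⟩
  have hW : IsCompOf W (S \ (U \ C)) := ⟨v, hBC (hV.subset hvV), hWdef⟩
  have hVW : V ⊆ W := fun y hy => hWdef ▸
    ⟨hBC (hV.subset hy), (hV.connectedIn v hvV y hy).mono (hV.subset.trans hBC)⟩
  have hbd := bdry_sdiff_subset_of_isCompOf (subset_union_left.trans hcl) hU hW
  refine ⟨W, hW.subset.trans sdiff_subset, hW.connectedIn, hVW, hbd,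
    fun y ⟨hyU, hyW⟩ => not_not.1 fun hyC => (hW.subset hyW).2 ⟨hyU, hyC⟩, ?_⟩
  have huS : u ∈ S := union_subset hAS hCS (hU.subset huU)
  obtain ⟨z, ⟨-, hzSW⟩, x, ⟨hxS, hxW⟩, hzx⟩ :=
    (hS u huS v (union_subset hBS hCS (hV.subset hvV))).exists_adj_exit (D := S \ W)
      ⟨huS, fun h => (hW.subset h).2 ⟨huU, huC⟩⟩ fun h => h.2 (hVW hvV)
  have hxW : x ∈ W := not_not.1 fun h => hxW ⟨hxS, h⟩
  exact ⟨x, hbd ⟨hxS, fun h => h.2 hxW, z, hzSW, hzx⟩, hxW⟩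

theorem ncard_inter_lt_of_lt_spanE {S C A B U V : Set Pt} {α β : ℝ} (hS : ConnectedIn S)
    (hcut : IsClosedCut S C A B) (hCfin : C.Finite) (hsmall : (C.ncard : ℕ∞) < theta S α β)
    (hU : IsCompOf U (A ∪ C)) (hV : IsCompOf V (B ∪ C))
    (hbU : α * (U ∩ C).ncard + β < SpanE U) (hbV : α * (V ∩ C).ncard + β < SpanE V) :
    (V ∩ C).ncard < (U ∩ C).ncard := by
  have hθ : ∀ n ≤ C.ncard, (n : ℕ∞) < theta S α β := fun n hn =>
    (Nat.cast_le.2 hn).trans_lt hsmall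
  have hUS : U ⊆ S := hU.subset.trans (union_subset hcut.1.2.1 hcut.1.1)
  have hVS : V ⊆ S := hV.subset.trans (union_subset hcut.1.2.2.1 hcut.1.1)
  have hUCn : (U ∩ C).ncard ≤ C.ncard := ncard_le_ncard inter_subset_right hCfin
  obtain ⟨W, hWS, hW, hVW, hbd, hUWC, hUW⟩ := exists_separating_set hS hcut hU hV
    (not_subset_of_lt_spanE hCfin hsmall hUS hU.connectedIn hbU)
  have hUWfin : (U ∩ W).Finite := hCfin.subset hUWC
  have key : ∀ K, U ∩ W ⊆ K → K ⊆ W → K.Finite →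
      (∀ X, U ∩ W ⊆ X → ConnectedIn X → ConnectedIn (X ∪ K)) → K.ncard ≤ C.ncard →
      SpanE U ≤ α * K.ncard + β ∨ SpanE V ≤ α * K.ncard + β :=
    fun K hUWK hKW hKfin hK hKC => spanE_le_or_spanE_le_of_lt_theta hUS hWS hbd
      hU.connectedIn hV.connectedIn hW hV.nonempty hVW hUWK hKW hKfin hK (hθ _ hKC)
  rcases le_or_gt 0 α with hα | hα
  · have hUWn : (U ∩ W).ncard ≤ (U ∩ C).ncard :=
      ncard_le_ncard (subset_inter inter_subset_left hUWC) (hCfin.subset inter_subset_right)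
    have : α * (U ∩ W).ncard ≤ α * (U ∩ C).ncard :=
      mul_le_mul_of_nonneg_left (by exact_mod_cast hUWn) hα
    rcases key (U ∩ W) subset_rfl inter_subset_right hUWfin
      (fun X hX _ => by rwa [union_eq_self_of_subset_right hX]) (hUWn.trans hUCn) with h | h
    · linarith
    · have : α * (V ∩ C).ncard < α * (U ∩ C).ncard := by linarith
      exact_mod_cast lt_of_mul_lt_mul_left this hα
  obtain ⟨K, hUWK, hKW, hKfin, hKn, hK | rfl, hKX⟩ :=
    hW.exists_extension inter_subset_right hUW hUWfin (ncard_le_ncard hUWC hCfin)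
  · have hVCn : (V ∩ C).ncard ≤ C.ncard := ncard_le_ncard inter_subset_right hCfin
    have : α * K.ncard ≤ α * (U ∩ C).ncard :=
      mul_le_mul_of_nonpos_left (by exact_mod_cast hK ▸ hUCn) hα.le
    have : α * K.ncard ≤ α * (V ∩ C).ncard :=
      mul_le_mul_of_nonpos_left (by exact_mod_cast hK ▸ hVCn) hα.le
    rcases key K hUWK hKW hKfin hKX hKn with h | h <;> linarith
  · have hVfin : V.Finite := hKfin.subset hVW
    have := spanE_le_of_lt_theta hVS hVfin hV.connectedIn
      (hθ _ ((ncard_le_ncard hVW hKfin).trans hKn))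
    have : α * V.ncard ≤ α * (V ∩ C).ncard :=
      mul_le_mul_of_nonpos_left (by exact_mod_cast ncard_le_ncard inter_subset_left hVfin) hα.le
    linarith

/-- Cut decomposition lemma: for a closed cut `(C,A,B)` of a connected `S`
with `|C| < θ(S,α,β)`, either every component `U` of `A ∪ C` satisfies
`Span(U) ≤ α|U ∩ C| + β`, or every component `V` of `B ∪ C` does. -/
theorem cut_decomposition (S C A B : Set Pt) (α β : ℝ)
    (hS : ConnectedIn S) (hcut : IsClosedCut S C A B) (hCfin : C.Finite)
    (hsmall : (C.ncard : ℕ∞) < theta S α β) :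
    (∀ U, IsCompOf U (A ∪ C) → SpanE U ≤ α * ((U ∩ C).ncard : ℝ) + β) ∨
    (∀ V, IsCompOf V (B ∪ C) → SpanE V ≤ α * ((V ∩ C).ncard : ℝ) + β) := by
  by_contra! h
  obtain ⟨⟨U, hU, hbU⟩, ⟨V, hV, hbV⟩⟩ := h
  have := ncard_inter_lt_of_lt_spanE hS hcut hCfin hsmall hU hV hbU hbV
  have := ncard_inter_lt_of_lt_spanE hS hcut.symm hCfin hsmall hV hU hbV hbU
  omega
end

section
/- (Pre-image sandwich) Let (C,R1,R2) be a closed cut of Q(S) and define S_j = Q^{-1}(R_j, S) = {a ∈ S : Q(a) ∩ R_j ≠ ∅}. Then R_j ⊆ Q(S_j) ⊆ R_j ∪ C for j = 1, 2, and S_1, S_2 are disjoint. -/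
open Set

/-- The paper's `Q⁻¹(R, S)`. -/
def tilePreimage (R S : Set Pt) : Set Pt := {a ∈ S | (tile a ∩ R).Nonempty}

lemma mem_QOp {S : Set Pt} {p : Pt} : p ∈ QOp S ↔ ∃ a ∈ S, p ∈ tile a := by
  simp [QOp]

lemma tile_subset_QOp {S : Set Pt} {a : Pt} (ha : a ∈ S) : tile a ⊆ QOp S :=
  subset_biUnion_of_mem (u := tile) ha

lemma eq_or_adjG_of_mem_tile_s17 {a p q : Pt} (hp : p ∈ tile a) (hq : q ∈ tile a) :
    p = q ∨ adjG p q := by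
  simp only [tile, mem_insert_iff, mem_singleton_iff] at hp hq
  rcases hp with rfl | rfl | rfl <;> rcases hq with rfl | rfl | rfl <;>
    simp [adjG, Prod.ext_iff]

lemma subset_QOp_tilePreimage {S R : Set Pt} (hR : R ⊆ QOp S) :
    R ⊆ QOp (tilePreimage R S) := by
  intro p hp
  obtain ⟨a, ha, hpa⟩ := mem_QOp.mp (hR hp)
  exact tile_subset_QOp (show a ∈ tilePreimage R S from ⟨ha, p, hpa, hp⟩) hpa

/-- Every tile is a clique of `G`, so a tile meeting `R` lies in `R ∪ bdry (QOp S) R`. -/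
lemma QOp_tilePreimage_subset {S R C : Set Pt} (hbd : bdry (QOp S) R ⊆ C) :
    QOp (tilePreimage R S) ⊆ R ∪ C := by
  intro p hp
  obtain ⟨a, ⟨ha, q, hqa, hqR⟩, hpa⟩ := mem_QOp.mp hp
  by_cases hpR : p ∈ R
  · exact Or.inl hpR
  rcases eq_or_adjG_of_mem_tile_s17 hqa hpa with rfl | hqp
  · exact Or.inl hqR
  · exact Or.inr (hbd ⟨tile_subset_QOp ha hpa, hpR, q, hqR, hqp⟩)

lemma disjoint_tilePreimage {S R₁ R₂ C : Set Pt} (hR : Disjoint R₁ R₂)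
    (hCR₂ : Disjoint C R₂) (hbd : bdry (QOp S) R₁ ⊆ C) :
    Disjoint (tilePreimage R₁ S) (tilePreimage R₂ S) := by
  rw [disjoint_left]
  rintro a ⟨ha, q₁, hq₁a, hq₁R⟩ ⟨-, q₂, hq₂a, hq₂R⟩
  rcases eq_or_adjG_of_mem_tile_s17 hq₁a hq₂a with rfl | hq₁q₂
  · exact disjoint_left.mp hR hq₁R hq₂R
  · have hq₂C : q₂ ∈ C :=
      hbd ⟨tile_subset_QOp ha hq₂a, disjoint_right.mp hR hq₂R, q₁, hq₁R, hq₁q₂⟩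
    exact disjoint_left.mp hCR₂ hq₂C hq₂R

/-- Pre-image sandwich: for a closed cut `(C,R1,R2)` of `Q(S)` and
`S_j = {a ∈ S : Q(a) ∩ R_j ≠ ∅}`, we have `R_j ⊆ Q(S_j) ⊆ R_j ∪ C`,
and `S_1, S_2` are disjoint. -/
theorem preimage_sandwich (S C R1 R2 : Set Pt)
    (hcut : IsClosedCut (QOp S) C R1 R2) :
    R1 ⊆ QOp {a ∈ S | (tile a ∩ R1).Nonempty} ∧
    QOp {a ∈ S | (tile a ∩ R1).Nonempty} ⊆ R1 ∪ C ∧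
    R2 ⊆ QOp {a ∈ S | (tile a ∩ R2).Nonempty} ∧
    QOp {a ∈ S | (tile a ∩ R2).Nonempty} ⊆ R2 ∪ C ∧
    Disjoint {a ∈ S | (tile a ∩ R1).Nonempty} {a ∈ S | (tile a ∩ R2).Nonempty} := by
  obtain ⟨⟨-, hR1, hR2, -, hCR2, hR12, -⟩, hbd⟩ := hcut
  have hbd1 : bdry (QOp S) R1 ⊆ C := subset_union_left.trans hbd
  have hbd2 : bdry (QOp S) R2 ⊆ C := subset_union_right.trans hbd
  exact ⟨subset_QOp_tilePreimage hR1, QOp_tilePreimage_subset hbd1,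
    subset_QOp_tilePreimage hR2, QOp_tilePreimage_subset hbd2,
    disjoint_tilePreimage hR12 hCR2 hbd1⟩
end
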